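/- arXiv:1010.2770 — 2 statements merged into one kernel-verified Lean document; each statement's English description precedes it below -/
import Mathlib

section
/- (One-round descent inequality for the online proximal algorithm.) Let Θ ⊆ ℝ^d be a closed convex set, let λ ≥ 0, η > 0, and G ≥ 0. Let L : ℝ^d → ℝ be convex and G-Lipschitz on Θ, and let R = R₁ + ⋯ + R_J where each R_j : ℝ^d → ℝ ∪ {+∞} is convex, lower semicontinuous and proper. Assume: (ii) for all θ ∈ ℝ^d and all j' < j, R_{j'}(θ) ≥ R_{j'}(prox_{ηλR_j}(θ)); and (iii) R(θ) ≥ R(Π_Θ(θ)) for all θ, where Π_Θ is the Euclidean projection onto Θ. Let θ_t ∈ Θ, let g ∈ ∂L(θ_t), set θ̃_{t+0/J} = θ_t − ηg, set θ̃_{t+j/J} = prox_{ηλR_j}(θ̃_{t+(j−1)/J}) for j = 1, …, J, and set θ_{t+1} = Π_Θ(θ̃_{t+J/J}). Then for every θ̄ ∈ Θ: L(θ_t) + λR(θ_{t+1}) ≤ L(θ̄) + λR(θ̄) + (η/2)G² + (‖θ̄ − θ_t‖² − ‖θ̄ − θ_{t+1}‖²)/(2η). -/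
open RealInnerProductSpace

noncomputable section

/-- Extended-real-valued convexity of `φ : E → ℝ ∪ {+∞}`. -/
def ERealConvexOn {E : Type*} [NormedAddCommGroup E] [InnerProductSpace ℝ E]
    (φ : E → EReal) : Prop :=
  ∀ x y : E, ∀ t : ℝ, 0 ≤ t → t ≤ 1 →
    φ (t • x + (1 - t) • y) ≤ (t : EReal) * φ x + ((1 - t : ℝ) : EReal) * φ y

/-- `φ` is proper: it never takes the value `−∞` (functions into `ℝ ∪ {+∞}`
never do) and is finite somewhere. -/
def ERealProper {E : Type*} (φ : E → EReal) : Prop :=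
  (∃ x, φ x ≠ ⊤) ∧ ∀ x, φ x ≠ ⊥

/-- `x` is the proximity point `prox_φ(y)`, i.e. a minimizer of
`z ↦ (1/2)‖z − y‖² + φ(z)`. -/
def IsProxPt {E : Type*} [NormedAddCommGroup E] (φ : E → EReal) (y x : E) : Prop :=
  ∀ z : E, (((1/2) * ‖x - y‖^2 : ℝ) : EReal) + φ x ≤ (((1/2) * ‖z - y‖^2 : ℝ) : EReal) + φ z

/-- The Moreau envelope `M_φ(y) = inf_x (1/2)‖x − y‖² + φ(x)`. -/
def moreauEnvelope {E : Type*} [NormedAddCommGroup E] (φ : E → EReal) (y : E) : EReal :=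
  ⨅ x : E, (((1/2) * ‖x - y‖^2 : ℝ) : EReal) + φ x

/-- The Fenchel conjugate `φ⋆(y) = sup_x ⟨y, x⟩ − φ(x)`. -/
def fenchelConjugate {E : Type*} [NormedAddCommGroup E] [InnerProductSpace ℝ E]
    (φ : E → EReal) (y : E) : EReal :=
  ⨆ x : E, ((⟪y, x⟫ : ℝ) : EReal) - φ x

/-- `g` is a subgradient of the convex function `L` at `θ₀`. -/
def IsSubgradientAt {E : Type*} [NormedAddCommGroup E] [InnerProductSpace ℝ E]
    (L : E → ℝ) (g θ₀ : E) : Prop :=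
  ∀ θ : E, (⟪g, θ - θ₀⟫ : ℝ) ≤ L θ - L θ₀

/-- `x = prox_{c·φ}(y)`: `x` minimizes `z ↦ (1/2)‖z − y‖² + c·φ(z)`. -/
def IsProxPtOf {E : Type*} [NormedAddCommGroup E] (c : ℝ) (φ : E → EReal) (y x : E) : Prop :=
  ∀ z : E, (((1/2) * ‖x - y‖^2 : ℝ) : EReal) + (c : EReal) * φ x
    ≤ (((1/2) * ‖z - y‖^2 : ℝ) : EReal) + (c : EReal) * φ z

/-- `x = Π_Θ(y)`: `x` is the Euclidean projection of `y` onto `Θ`. -/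
def IsProjPt {E : Type*} [NormedAddCommGroup E] (Θ : Set E) (y x : E) : Prop :=
  x ∈ Θ ∧ ∀ z ∈ Θ, ‖x - y‖ ≤ ‖z - y‖

/-!
Each prox step `x = prox_{cφ}(y)` satisfies the three-point inequality
`c φ(x) + ‖z - x‖²/2 ≤ c φ(z) + ‖z - y‖²/2`: compare the prox objective at `x` with its value
at `x + t (z - x)`, bound `φ` there by convexity, and let `t → 0`. The projection onto `Θ`
likewise does not increase the distance to points of `Θ`. Telescoping along the round gives
`ηλ ∑ⱼ Rⱼ(θ̃ⱼ) + ‖θ̄ - θ_{t+1}‖²/2 ≤ ηλ R(θ̄) + ‖θ̄ - (θ_t - ηg)‖²/2`, and conditions (ii) and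
(iii) bound `R(θ_{t+1})` by `∑ⱼ Rⱼ(θ̃ⱼ)`. Expanding the gradient step with the subgradient
inequality and `‖g‖ ≤ G` gives the claim. If `λ = 0` the prox steps are identities, and if
`λ > 0` and `R(θ̄) = ⊤` there is nothing to prove.
-/

lemma Fin.sum_add_le_sum_add_of_le {n : ℕ} (u : Fin (n + 1) → ℝ) (a b : Fin n → ℝ)
    (h : ∀ j, a j + u j.succ ≤ b j + u j.castSucc) :
    ∑ j, a j + u (Fin.last n) ≤ ∑ j, b j + u 0 := by
  induction n with
  | zero => simp
  | succ n ih =>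
    have hinit := ih (u ∘ Fin.castSucc) (a ∘ Fin.castSucc) (b ∘ Fin.castSucc)
      fun j => by simpa only [Function.comp_apply, Fin.succ_castSucc] using h j.castSucc
    have hlast := h (Fin.last n)
    simp only [Function.comp_apply, Fin.castSucc_zero] at hinit
    rw [Fin.succ_last] at hlast
    rw [Fin.sum_univ_castSucc, Fin.sum_univ_castSucc]
    linarith

lemma Fin.apply_last_le_of_succ_le {n : ℕ} {β : Type*} [Preorder β] {u : Fin (n + 1) → β}
    {m : Fin (n + 1)} (h : ∀ k : Fin n, m ≤ k.castSucc → u k.succ ≤ u k.castSucc) :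
    u (Fin.last n) ≤ u m := by
  suffices ∀ k, m ≤ k → u k ≤ u m from this _ (Fin.le_last m)
  intro k
  induction k using Fin.induction with
  | zero => intro hm; rw [nonpos_iff_eq_zero.1 hm]
  | succ k ih =>
    intro hm
    rcases hm.lt_or_eq with hlt | rfl
    · have hk : m ≤ k.castSucc := Fin.le_castSucc_iff.2 hlt
      exact (h k hk).trans (ih hk)
    · exact le_rfl

lemma Fin.sum_apply_last_le_sum_apply_succ {α β : Type*} [AddCommMonoid β] [PartialOrder β]
    [IsOrderedAddMonoid β] {n : ℕ} (φ : Fin n → α → β) (x : Fin (n + 1) → α)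
    (h : ∀ j k : Fin n, j < k → φ j (x k.succ) ≤ φ j (x k.castSucc)) :
    ∑ j, φ j (x (Fin.last n)) ≤ ∑ j, φ j (x j.succ) :=
  Finset.sum_le_sum fun j _ => Fin.apply_last_le_of_succ_le (u := fun k => φ j (x k))
    fun k hk => h j k (Fin.succ_le_castSucc_iff.1 hk)

lemma EReal.coe_finsetSum {ι : Type*} (s : Finset ι) (f : ι → ℝ) :
    ((∑ i ∈ s, f i : ℝ) : EReal) = ∑ i ∈ s, (f i : EReal) :=
  map_sum (⟨⟨Real.toEReal, EReal.coe_zero⟩, EReal.coe_add⟩ : ℝ →+ EReal) f s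

lemma EReal.finsetSum_eq_coe_sum_toReal {ι : Type*} {s : Finset ι} {f : ι → EReal}
    (htop : ∀ i ∈ s, f i ≠ ⊤) (hbot : ∀ i ∈ s, f i ≠ ⊥) :
    ∑ i ∈ s, f i = ((∑ i ∈ s, (f i).toReal : ℝ) : EReal) := by
  rw [EReal.coe_finsetSum]
  exact Finset.sum_congr rfl fun i hi => (EReal.coe_toReal (htop i hi) (hbot i hi)).symm

lemma EReal.finsetSum_eq_top {ι : Type*} {s : Finset ι} {f : ι → EReal}
    (hbot : ∀ i ∈ s, f i ≠ ⊥) {i : ι} (hi : i ∈ s) (htop : f i = ⊤) : ∑ j ∈ s, f j = ⊤ := by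
  classical
  rw [← Finset.add_sum_erase s f hi, htop]
  refine EReal.top_add_of_ne_bot (Finset.sum_induction _ (· ≠ ⊥) (fun a b ha hb => ?_)
    EReal.zero_ne_bot fun j hj => hbot j (Finset.mem_of_mem_erase hj))
  exact EReal.add_ne_bot_iff.2 ⟨ha, hb⟩

section ProxAndProjection

variable {E : Type*} [NormedAddCommGroup E] {φ : E → EReal} {c : ℝ} {y x z : E}

lemma IsProxPtOf.eq_of_zero (hx : IsProxPtOf 0 φ y x) : x = y := by
  have h := hx y
  simp only [EReal.coe_zero, zero_mul, add_zero, sub_self, norm_zero, EReal.coe_le_coe_iff] at h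
  rw [← sub_eq_zero, ← norm_eq_zero]
  nlinarith [norm_nonneg (x - y)]

lemma IsProxPtOf.ne_top (hx : IsProxPtOf c φ y x) (hc : 0 < c) (hbot : ∀ x, φ x ≠ ⊥)
    (hz : φ z ≠ ⊤) : φ x ≠ ⊤ := by
  intro htop
  have h := hx z
  rw [htop, EReal.coe_mul_top_of_pos hc, EReal.coe_add_top, top_le_iff,
    ← EReal.coe_toReal hz (hbot z), ← EReal.coe_mul, ← EReal.coe_add] at h
  exact EReal.coe_ne_top _ h

variable [InnerProductSpace ℝ E]

open Filter Topology in
lemma le_inner_of_forall_segment {a : ℝ}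
    (h : ∀ t ∈ Set.Ioc (0 : ℝ) 1, t * a + ‖x - y‖ ^ 2 / 2 ≤ ‖x + t • (z - x) - y‖ ^ 2 / 2) :
    a ≤ ⟪x - y, z - x⟫ := by
  have hbound : ∀ t ∈ Set.Ioc (0 : ℝ) 1, a ≤ ⟪x - y, z - x⟫ + t * (‖z - x‖ ^ 2 / 2) := by
    intro t ht
    have hexp : ‖x + t • (z - x) - y‖ ^ 2
        = ‖x - y‖ ^ 2 + 2 * t * ⟪x - y, z - x⟫ + t ^ 2 * ‖z - x‖ ^ 2 := by
      rw [show x + t • (z - x) - y = (x - y) + t • (z - x) by abel, norm_add_sq_real,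
        real_inner_smul_right, norm_smul, mul_pow, Real.norm_eq_abs, sq_abs]
      ring
    have := h t ht
    rw [hexp] at this
    refine le_of_mul_le_mul_left ?_ ht.1
    nlinarith
  have hlim : Tendsto (fun t : ℝ => ⟪x - y, z - x⟫ + t * (‖z - x‖ ^ 2 / 2)) (𝓝[>] 0)
      (𝓝 ⟪x - y, z - x⟫) := by
    have ht : Tendsto (fun t : ℝ => t) (𝓝[>] 0) (𝓝 0) := nhdsWithin_le_nhds
    simpa using (ht.mul_const (‖z - x‖ ^ 2 / 2)).const_add ⟪x - y, z - x⟫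
  exact ge_of_tendsto hlim (eventually_of_mem (Ioc_mem_nhdsGT one_pos) hbound)

lemma IsProjPt.norm_sub_sq_le {Θ : Set E} (hΘ : Convex ℝ Θ) (h : IsProjPt Θ y x)
    (hz : z ∈ Θ) : ‖z - x‖ ^ 2 ≤ ‖z - y‖ ^ 2 := by
  have : Nonempty Θ := ⟨⟨x, h.1⟩⟩
  have hinf : ‖y - x‖ = ⨅ w : Θ, ‖y - w‖ :=
    le_antisymm (le_ciInf fun w => by simpa only [norm_sub_rev y] using h.2 w w.2)
      (ciInf_le (f := fun w : Θ => ‖y - w‖) ⟨0, Set.forall_mem_range.2 fun _ => norm_nonneg _⟩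
        ⟨x, h.1⟩)
  have hvar := (norm_eq_iInf_iff_real_inner_le_zero hΘ h.1).1 hinf z hz
  have hexp : ‖z - y‖ ^ 2 = ‖z - x‖ ^ 2 - 2 * ⟪z - x, y - x⟫ + ‖y - x‖ ^ 2 := by
    rw [← norm_sub_sq_real, sub_sub_sub_cancel_right]
  rw [real_inner_comm] at hexp
  nlinarith [sq_nonneg ‖y - x‖]

lemma IsProxPtOf.three_point (hx : IsProxPtOf c φ y x) (hc : 0 ≤ c) (hφ : ERealConvexOn φ)
    {a b : ℝ} (ha : φ x = a) (hb : φ z = b) :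
    c * a + ‖x - y‖ ^ 2 / 2 + ‖z - x‖ ^ 2 / 2 ≤ c * b + ‖z - y‖ ^ 2 / 2 := by
  have hvar : c * (a - b) ≤ ⟪x - y, z - x⟫ := le_inner_of_forall_segment fun t ht => by
    have hw : t • z + (1 - t) • x = x + t • (z - x) := by module
    have hconv := hφ z x t ht.1.le ht.2
    rw [hb, ha, hw, ← EReal.coe_mul, ← EReal.coe_mul, ← EReal.coe_add] at hconv
    have hmin : (((1 / 2) * ‖x - y‖ ^ 2 + c * a : ℝ) : EReal)
        ≤ (((1 / 2) * ‖x + t • (z - x) - y‖ ^ 2 + c * (t * b + (1 - t) * a) : ℝ) : EReal) :=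
      calc _ = (((1 / 2) * ‖x - y‖ ^ 2 : ℝ) : EReal) + (c : EReal) * φ x := by
              rw [ha]; norm_cast
        _ ≤ (((1 / 2) * ‖x + t • (z - x) - y‖ ^ 2 : ℝ) : EReal)
              + (c : EReal) * φ (x + t • (z - x)) := hx _
        _ ≤ _ := by
              rw [EReal.coe_add, EReal.coe_mul c]
              gcongr
    rw [EReal.coe_le_coe_iff] at hmin
    linarith
  have hexp : ‖z - y‖ ^ 2 = ‖z - x‖ ^ 2 + 2 * ⟪z - x, x - y⟫ + ‖x - y‖ ^ 2 := by
    rw [← norm_add_sq_real, sub_add_sub_cancel]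
  rw [real_inner_comm] at hexp
  linarith

lemma IsProxPtOf.sum_toReal_add_le_of_chain {n : ℕ} (hc : 0 < c) {φ : Fin n → E → EReal}
    (hconv : ∀ j, ERealConvexOn (φ j)) (hbot : ∀ j x, φ j x ≠ ⊥) {x : Fin (n + 1) → E}
    (hsteps : ∀ j : Fin n, IsProxPtOf c (φ j) (x j.castSucc) (x j.succ))
    (hz : ∀ j, φ j z ≠ ⊤) :
    c * ∑ j, (φ j (x j.succ)).toReal + ‖z - x (Fin.last n)‖ ^ 2 / 2
      ≤ c * ∑ j, (φ j z).toReal + ‖z - x 0‖ ^ 2 / 2 := by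
  rw [Finset.mul_sum, Finset.mul_sum]
  refine Fin.sum_add_le_sum_add_of_le (fun k => ‖z - x k‖ ^ 2 / 2) _ _ fun j => ?_
  have hfin := (hsteps j).ne_top hc (hbot j) (hz j)
  have h := (hsteps j).three_point hc.le (hconv j) (EReal.coe_toReal hfin (hbot j _)).symm
    (EReal.coe_toReal (hz j) (hbot j z)).symm
  linarith [sq_nonneg ‖x j.succ - x j.castSucc‖]

end ProxAndProjection

lemma IsSubgradientAt.add_le_of_gradient_step {E : Type*} [NormedAddCommGroup E]
    [InnerProductSpace ℝ E] {L : E → ℝ} {g θ z w : E} {η G r s : ℝ}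
    (hg : IsSubgradientAt L g θ) (hgG : ‖g‖ ≤ G) (hη : 0 < η)
    (h : η * r + ‖z - w‖ ^ 2 / 2 ≤ η * s + ‖z - (θ - η • g)‖ ^ 2 / 2) :
    L θ + r ≤ L z + s + (η / 2 * G ^ 2 + (‖z - θ‖ ^ 2 - ‖z - w‖ ^ 2) / (2 * η)) := by
  have hexp : ‖z - (θ - η • g)‖ ^ 2 = ‖z - θ‖ ^ 2 + 2 * η * ⟪g, z - θ⟫ + η ^ 2 * ‖g‖ ^ 2 := by
    rw [sub_sub_eq_add_sub, add_sub_right_comm, norm_add_sq_real, real_inner_smul_right,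
      norm_smul, mul_pow, Real.norm_eq_abs, sq_abs, real_inner_comm]
    ring
  have hG : η ^ 2 * ‖g‖ ^ 2 ≤ η ^ 2 * G ^ 2 := by gcongr
  have hL : η * ⟪g, z - θ⟫ ≤ η * (L z - L θ) := mul_le_mul_of_nonneg_left (hg z) hη.le
  have key : (L θ + r - L z - s - η / 2 * G ^ 2) * (2 * η) ≤ ‖z - θ‖ ^ 2 - ‖z - w‖ ^ 2 := by
    nlinarith
  have := (le_div_iff₀ (by positivity)).2 key
  linarith

theorem online_prox_one_round_general {d J : ℕ}
    (Θ : Set (EuclideanSpace ℝ (Fin d))) (hΘconv : Convex ℝ Θ)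
    (lam η G : ℝ) (hlam : 0 ≤ lam) (hη : 0 < η)
    (L : EuclideanSpace ℝ (Fin d) → ℝ)
    (hLlip : ∀ θ₀ ∈ Θ, ∀ g : EuclideanSpace ℝ (Fin d), IsSubgradientAt L g θ₀ → ‖g‖ ≤ G)
    (R : Fin J → EuclideanSpace ℝ (Fin d) → EReal)
    (hRconv : ∀ j, ERealConvexOn (R j))
    (hRprop : ∀ j, ERealProper (R j))
    -- condition (ii): each prox operator does not increase the previous `R_{j'}`
    (hii : ∀ j j' : Fin J, j' < j → ∀ θ θ' : EuclideanSpace ℝ (Fin d),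
      IsProxPtOf (η * lam) (R j) θ θ' → R j' θ' ≤ R j' θ)
    -- condition (iii): projecting onto `Θ` does not increase `R`
    (hiii : ∀ θ θ' : EuclideanSpace ℝ (Fin d), IsProjPt Θ θ θ' →
      (∑ j, R j θ') ≤ ∑ j, R j θ)
    -- one round of the algorithm
    (θt : EuclideanSpace ℝ (Fin d)) (hθt : θt ∈ Θ)
    (g : EuclideanSpace ℝ (Fin d)) (hg : IsSubgradientAt L g θt)
    (θtil : Fin (J + 1) → EuclideanSpace ℝ (Fin d))
    (h0 : θtil 0 = θt - η • g)
    (hsteps : ∀ j : Fin J, IsProxPtOf (η * lam) (R j) (θtil j.castSucc) (θtil j.succ))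
    (θnext : EuclideanSpace ℝ (Fin d)) (hproj : IsProjPt Θ (θtil (Fin.last J)) θnext)
    (θbar : EuclideanSpace ℝ (Fin d)) (hθbar : θbar ∈ Θ) :
    ((L θt : ℝ) : EReal) + (lam : EReal) * (∑ j, R j θnext)
      ≤ ((L θbar : ℝ) : EReal) + (lam : EReal) * (∑ j, R j θbar)
        + ((η / 2 * G ^ 2 + (‖θbar - θt‖ ^ 2 - ‖θbar - θnext‖ ^ 2) / (2 * η) : ℝ) : EReal) := by
  have hgG := hLlip θt hθt g hg
  have hθnext := hproj.norm_sub_sq_le hΘconv hθbar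
  have hbot j := (hRprop j).2
  rcases hlam.eq_or_lt with rfl | hlam
  · simp only [mul_zero] at hsteps
    have hlast : ‖θbar - θtil (Fin.last J)‖ ^ 2 ≤ ‖θbar - θtil 0‖ ^ 2 :=
      Fin.apply_last_le_of_succ_le (u := fun k => ‖θbar - θtil k‖ ^ 2) fun k _ => by
        rw [(hsteps k).eq_of_zero]
    have h := hg.add_le_of_gradient_step hgG hη (z := θbar) (w := θnext) (r := 0) (s := 0)
      (by rw [← h0]; linarith)
    simp only [EReal.coe_zero, zero_mul, add_zero] at h ⊢
    exact_mod_cast h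
  by_cases hfin : ∀ j, R j θbar ≠ ⊤
  · have hc : 0 < η * lam := mul_pos hη hlam
    have hnext : ∑ j, R j θnext ≤ ((∑ j, (R j (θtil j.succ)).toReal : ℝ) : EReal) :=
      calc ∑ j, R j θnext ≤ ∑ j, R j (θtil (Fin.last J)) := hiii _ _ hproj
        _ ≤ ∑ j, R j (θtil j.succ) := Fin.sum_apply_last_le_sum_apply_succ R θtil
            fun j k hjk => hii k j hjk _ _ (hsteps k)
        _ = _ := EReal.finsetSum_eq_coe_sum_toReal
            (fun j _ => (hsteps j).ne_top hc (hbot j) (hfin j)) fun j _ => hbot j _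
    have hchain := IsProxPtOf.sum_toReal_add_le_of_chain hc hRconv hbot hsteps hfin
    rw [h0] at hchain
    have hreal := hg.add_le_of_gradient_step hgG hη (z := θbar) (w := θnext)
      (r := lam * ∑ j, (R j (θtil j.succ)).toReal) (s := lam * ∑ j, (R j θbar).toReal)
      (by linarith)
    rw [EReal.finsetSum_eq_coe_sum_toReal (fun j _ => hfin j) fun j _ => hbot j _]
    calc _ ≤ ((L θt : ℝ) : EReal) + lam * ((∑ j, (R j (θtil j.succ)).toReal : ℝ) : EReal) := by
          gcongr
      _ ≤ _ := by exact_mod_cast hreal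
  · obtain ⟨j, hj⟩ := not_forall_not.1 hfin
    rw [EReal.finsetSum_eq_top (fun i _ => hbot i θbar) (Finset.mem_univ j) hj,
      EReal.coe_mul_top_of_pos hlam, EReal.add_top_of_ne_bot (EReal.coe_ne_bot _),
      EReal.top_add_of_ne_bot (EReal.coe_ne_bot _)]
    exact le_top

/-- one-round descent inequality for the online proximal algorithm. -/
theorem online_prox_one_round {d J : ℕ} (hJ : 0 < J)
    (Θ : Set (EuclideanSpace ℝ (Fin d))) (hΘc : IsClosed Θ) (hΘconv : Convex ℝ Θ)
    (lam η G : ℝ) (hlam : 0 ≤ lam) (hη : 0 < η) (hG : 0 ≤ G)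
    (L : EuclideanSpace ℝ (Fin d) → ℝ) (hLconv : ConvexOn ℝ Set.univ L)
    (hLlip : ∀ θ₀ ∈ Θ, ∀ g : EuclideanSpace ℝ (Fin d), IsSubgradientAt L g θ₀ → ‖g‖ ≤ G)
    (R : Fin J → EuclideanSpace ℝ (Fin d) → EReal)
    (hRconv : ∀ j, ERealConvexOn (R j)) (hRlsc : ∀ j, LowerSemicontinuous (R j))
    (hRprop : ∀ j, ERealProper (R j))
    -- condition (ii): each prox operator does not increase the previous `R_{j'}`
    (hii : ∀ j j' : Fin J, j' < j → ∀ θ θ' : EuclideanSpace ℝ (Fin d),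
      IsProxPtOf (η * lam) (R j) θ θ' → R j' θ' ≤ R j' θ)
    -- condition (iii): projecting onto `Θ` does not increase `R`
    (hiii : ∀ θ θ' : EuclideanSpace ℝ (Fin d), IsProjPt Θ θ θ' →
      (∑ j, R j θ') ≤ ∑ j, R j θ)
    -- one round of the algorithm
    (θt : EuclideanSpace ℝ (Fin d)) (hθt : θt ∈ Θ)
    (g : EuclideanSpace ℝ (Fin d)) (hg : IsSubgradientAt L g θt)
    (θtil : Fin (J + 1) → EuclideanSpace ℝ (Fin d))
    (h0 : θtil 0 = θt - η • g)
    (hsteps : ∀ j : Fin J, IsProxPtOf (η * lam) (R j) (θtil j.castSucc) (θtil j.succ))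
    (θnext : EuclideanSpace ℝ (Fin d)) (hproj : IsProjPt Θ (θtil (Fin.last J)) θnext)
    (θbar : EuclideanSpace ℝ (Fin d)) (hθbar : θbar ∈ Θ) :
    ((L θt : ℝ) : EReal) + (lam : EReal) * (∑ j, R j θnext)
      ≤ ((L θbar : ℝ) : EReal) + (lam : EReal) * (∑ j, R j θbar)
        + ((η / 2 * G ^ 2 + (‖θbar - θt‖ ^ 2 - ‖θbar - θnext‖ ^ 2) / (2 * η) : ℝ) : EReal) :=
  online_prox_one_round_general Θ hΘconv lam η G hlam hη L hLlip R hRconv hRprop hii hiii θt hθt g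
    hg θtil h0 hsteps θnext hproj θbar hθbar
end
end

section
/- (One-round descent inequality, strongly convex case.) Under the setting and assumptions of the one-round descent inequality for the online proximal algorithm, assume in addition that L is σ-strongly convex on Θ, i.e., for all θ₀ ∈ Θ, all g ∈ ∂L(θ₀), and all θ ∈ ℝ^d, L(θ) ≥ L(θ₀) + ⟨g, θ − θ₀⟩ + (σ/2)‖θ − θ₀‖². Then for every θ̄ ∈ Θ: L(θ_t) + λR(θ_{t+1}) ≤ L(θ̄) + λR(θ̄) + (η/2)G² + (‖θ̄ − θ_t‖² − ‖θ̄ − θ_{t+1}‖²)/(2η) − (σ/2)‖θ̄ − θ_t‖². -/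
open RealInnerProductSpace

noncomputable section

/-!
Each proximal step `x = prox_{ηλR_j}(y)` satisfies the three-point inequality
`½‖θ̄ - x‖² + ηλ R_j(x) ≤ ½‖θ̄ - y‖² + ηλ R_j(θ̄)`: comparing `x` with the points of the segment
`[x, θ̄]` and letting them tend to `x` gives `⟪x - y, θ̄ - x⟫ ≥ ηλ (R_j(x) - R_j(θ̄))`. The
projection onto `Θ` is the same argument with `R_j = 0`. Summing over `j` telescopes the distances,
conditions (ii) and (iii) bound `R(θ_{t+1})` by `∑_j R_j(θ̃_{t+j/J})`, and strong convexity with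
`‖g‖ ≤ G` bounds the gradient step `½‖θ̄ - (θ_t - ηg)‖²`. The argument runs in `EReal` throughout,
so an infinite `R_j(θ̄)` needs no separate case.
-/

open Filter Topology

theorem Fin.add_sum_le_add_sum_of_succ_add_le {M : Type*} [AddCommMonoid M] [PartialOrder M]
    [IsOrderedAddMonoid M] {n : ℕ} (q : Fin (n + 1) → M) (f g : Fin n → M)
    (h : ∀ j : Fin n, q j.succ + f j ≤ q j.castSucc + g j) :
    q (Fin.last n) + ∑ j, f j ≤ q 0 + ∑ j, g j := by
  induction n with
  | zero => simp [Fin.last_zero]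
  | succ n ih =>
    have htail := ih (fun i : Fin (n + 1) => q i.succ) (fun j : Fin n => f j.succ)
      (fun j : Fin n => g j.succ) fun j => h j.succ
    have hhead := h 0
    rw [Fin.castSucc_zero] at hhead
    rw [Fin.sum_univ_succ, Fin.sum_univ_succ, ← Fin.succ_last]
    calc q (Fin.last n).succ + (f 0 + ∑ j : Fin n, f j.succ)
        = f 0 + (q (Fin.last n).succ + ∑ j : Fin n, f j.succ) := by abel
      _ ≤ f 0 + (q (0 : Fin (n + 1)).succ + ∑ j : Fin n, g j.succ) := add_le_add_right htail _
      _ = (q (0 : Fin (n + 1)).succ + f 0) + ∑ j : Fin n, g j.succ := by abel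
      _ ≤ (q 0 + g 0) + ∑ j : Fin n, g j.succ := add_le_add_left hhead _
      _ = q 0 + (g 0 + ∑ j : Fin n, g j.succ) := add_assoc _ _ _

theorem Fin.apply_last_le_of_succ_le_castSucc {β : Type*} [Preorder β] {n : ℕ}
    (u : Fin (n + 1) → β) (i : Fin (n + 1))
    (h : ∀ k : Fin n, i ≤ k.castSucc → u k.succ ≤ u k.castSucc) :
    u (Fin.last n) ≤ u i := by
  induction i using Fin.reverseInduction with
  | last => exact le_rfl
  | cast k ih => exact (ih fun m hm => h m ((Fin.castSucc_le_succ k).trans hm)).trans (h k le_rfl)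

theorem le_of_forall_mem_Ioc_le_add_mul {A B C : ℝ}
    (h : ∀ t ∈ Set.Ioc (0 : ℝ) 1, A ≤ B + t * C) : A ≤ B := by
  have hlim : Tendsto (fun t : ℝ => B + t * C) (𝓝[>] 0) (𝓝 B) := by
    have hcont : Continuous fun t : ℝ => B + t * C := by fun_prop
    simpa using (hcont.tendsto 0).mono_left nhdsWithin_le_nhds
  exact ge_of_tendsto hlim (Filter.mem_of_superset (Ioc_mem_nhdsGT zero_lt_one) h)

namespace EReal

theorem coe_mul_sum_of_nonneg {ι : Type*} (s : Finset ι) (f : ι → EReal) {c : ℝ} (hc : 0 ≤ c) :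
    (c : EReal) * ∑ i ∈ s, f i = ∑ i ∈ s, (c : EReal) * f i :=
  map_sum (⟨⟨fun x => (c : EReal) * x, mul_zero _⟩,
    left_distrib_of_nonneg_of_ne_top (EReal.coe_nonneg.2 hc) (coe_ne_top c)⟩ : EReal →+ EReal) f s

theorem coe_mul_ne_bot_of_nonneg {c : ℝ} (hc : 0 ≤ c) {x : EReal} (hx : x ≠ ⊥) :
    (c : EReal) * x ≠ ⊥ := by
  rw [mul_ne_bot]
  exact ⟨.inl (coe_ne_bot c), .inr hx, .inl (coe_ne_top c), .inl (EReal.coe_nonneg.2 hc)⟩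

theorem coe_div_add_le_coe_div_add {η a b : ℝ} (hη : 0 < η) {u v : EReal}
    (h : (a : EReal) + η * u ≤ b + η * v) :
    ((a / η : ℝ) : EReal) + u ≤ ((b / η : ℝ) : EReal) + v := by
  have hinv : (0 : EReal) ≤ ((η⁻¹ : ℝ) : EReal) := EReal.coe_nonneg.2 (inv_nonneg.2 hη.le)
  have hcancel : ∀ w : EReal, ((η⁻¹ : ℝ) : EReal) * (η * w) = w := fun w => by
    rw [← mul_assoc, ← coe_mul, inv_mul_cancel₀ hη.ne', coe_one, one_mul]
  have := mul_le_mul_of_nonneg_left h hinv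
  rwa [left_distrib_of_nonneg_of_ne_top hinv (coe_ne_top _),
    left_distrib_of_nonneg_of_ne_top hinv (coe_ne_top _), hcancel, hcancel, ← coe_mul, ← coe_mul,
    inv_mul_eq_div, inv_mul_eq_div] at this

theorem coe_add_le_coe_add_add_coe {a b s t k : ℝ} {u v : EReal} (h : (a : EReal) + u ≤ b + v)
    (hk : s + b ≤ t + a + k) : (s : EReal) + u ≤ t + v + k :=
  calc (s : EReal) + u = ((s - a : ℝ) : EReal) + (a + u) := by
        rw [← add_assoc, ← coe_add, _root_.sub_add_cancel s a]
    _ ≤ ((s - a : ℝ) : EReal) + (b + v) := add_le_add_right h _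
    _ = ((s - a + b : ℝ) : EReal) + v := by rw [← add_assoc, ← coe_add]
    _ ≤ ((t + k : ℝ) : EReal) + v := add_le_add_left (EReal.coe_le_coe_iff.2 (by linarith)) _
    _ = t + v + k := by rw [coe_add, add_right_comm]

end EReal

section InnerProductSpace

variable {E : Type*} [NormedAddCommGroup E] [InnerProductSpace ℝ E]

theorem half_norm_sub_sq_add_le_of_segment {x y z : E} {a b : ℝ}
    (h : ∀ t ∈ Set.Ioc (0 : ℝ) 1,
      1 / 2 * ‖x - y‖ ^ 2 + a ≤ 1 / 2 * ‖x + t • (z - x) - y‖ ^ 2 + (t * b + (1 - t) * a)) :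
    1 / 2 * ‖z - x‖ ^ 2 + a ≤ 1 / 2 * ‖z - y‖ ^ 2 + b := by
  have hslope : ∀ t ∈ Set.Ioc (0 : ℝ) 1,
      a - b ≤ ⟪x - y, z - x⟫ + t * (1 / 2 * ‖z - x‖ ^ 2) := by
    intro t ht
    have hseg := h t ht
    rw [show x + t • (z - x) - y = (x - y) + t • (z - x) by abel, norm_add_sq_real,
      real_inner_smul_right, norm_smul, Real.norm_eq_abs, abs_of_pos ht.1] at hseg
    refine le_of_mul_le_mul_left ?_ ht.1
    linarith
  have hinner : a - b ≤ ⟪x - y, z - x⟫ := le_of_forall_mem_Ioc_le_add_mul hslope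
  have hexpand : ‖z - y‖ ^ 2 = ‖z - x‖ ^ 2 + 2 * ⟪x - y, z - x⟫ + ‖x - y‖ ^ 2 := by
    rw [show z - y = (z - x) + (x - y) by abel, norm_add_sq_real, real_inner_comm]
  nlinarith [sq_nonneg ‖x - y‖]

theorem ERealConvexOn.const_mul {φ : E → EReal} (hφ : ERealConvexOn φ) {c : ℝ} (hc : 0 ≤ c) :
    ERealConvexOn fun x => (c : EReal) * φ x := by
  intro x y t ht0 ht1
  have hc' : (0 : EReal) ≤ c := EReal.coe_nonneg.2 hc
  calc (c : EReal) * φ (t • x + (1 - t) • y)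
      ≤ c * ((t : EReal) * φ x + ((1 - t : ℝ) : EReal) * φ y) :=
        mul_le_mul_of_nonneg_left (hφ x y t ht0 ht1) hc'
    _ = (t : EReal) * (c * φ x) + ((1 - t : ℝ) : EReal) * (c * φ y) := by
        rw [EReal.left_distrib_of_nonneg_of_ne_top hc' (EReal.coe_ne_top c), mul_left_comm,
          mul_left_comm (c : EReal)]

theorem IsProxPt.half_norm_sub_sq_add_le {ψ : E → EReal} (hψ : ERealConvexOn ψ)
    (hψ_bot : ∀ w, ψ w ≠ ⊥) {y x : E} (hx : IsProxPt ψ y x) (z : E) :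
    ((1 / 2 * ‖z - x‖ ^ 2 : ℝ) : EReal) + ψ x ≤ ((1 / 2 * ‖z - y‖ ^ 2 : ℝ) : EReal) + ψ z := by
  rcases eq_or_ne (ψ z) ⊤ with hz | hz
  · rw [hz, EReal.add_top_of_ne_bot (EReal.coe_ne_bot _)]
    exact le_top
  lift ψ z to ℝ using ⟨hz, hψ_bot z⟩ with b hb
  have hx_top : ψ x ≠ ⊤ := by
    intro hx_top
    have := hx z
    rw [hx_top, EReal.add_top_of_ne_bot (EReal.coe_ne_bot _), ← hb, ← EReal.coe_add,
      top_le_iff] at this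
    exact EReal.coe_ne_top _ this
  lift ψ x to ℝ using ⟨hx_top, hψ_bot x⟩ with a ha
  refine EReal.coe_le_coe_iff.2 (half_norm_sub_sq_add_le_of_segment fun t ht => ?_)
  have hconv := hψ z x t ht.1.le ht.2
  rw [← hb, ← ha, show t • z + (1 - t) • x = x + t • (z - x) by module] at hconv
  have hmin := hx (x + t • (z - x))
  rw [← ha] at hmin
  exact_mod_cast hmin.trans (add_le_add_right hconv _)

theorem IsProjPt.norm_sub_le {Θ : Set E} (hΘ : Convex ℝ Θ) {y x z : E} (hx : IsProjPt Θ y x)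
    (hz : z ∈ Θ) : ‖z - x‖ ≤ ‖z - y‖ := by
  have hsq : 1 / 2 * ‖z - x‖ ^ 2 + 0 ≤ 1 / 2 * ‖z - y‖ ^ 2 + 0 :=
    half_norm_sub_sq_add_le_of_segment fun t ht => by
      have hmin := hx.2 _ (hΘ.add_smul_sub_mem hx.1 hz (Set.Ioc_subset_Icc_self ht))
      have := pow_le_pow_left₀ (norm_nonneg _) hmin 2
      linarith
  exact (pow_le_pow_iff_left₀ (norm_nonneg _) (norm_nonneg _) two_ne_zero).1 (by linarith)

theorem half_norm_sub_sub_smul_sq_le {L : E → ℝ} {x z g : E} {η σ G : ℝ} (hη : 0 ≤ η)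
    (hg : ‖g‖ ≤ G) (hstrong : L x + ⟪g, z - x⟫ + σ / 2 * ‖z - x‖ ^ 2 ≤ L z) :
    1 / 2 * ‖z - (x - η • g)‖ ^ 2
      ≤ 1 / 2 * ‖z - x‖ ^ 2 - η * (L x - L z) - η * σ / 2 * ‖z - x‖ ^ 2 + η ^ 2 / 2 * G ^ 2 := by
  have hexpand : ‖z - (x - η • g)‖ ^ 2 = ‖z - x‖ ^ 2 + 2 * η * ⟪g, z - x⟫ + η ^ 2 * ‖g‖ ^ 2 := by
    rw [show z - (x - η • g) = (z - x) + η • g by abel, norm_add_sq_real, real_inner_smul_right,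
      norm_smul, Real.norm_eq_abs, abs_of_nonneg hη, real_inner_comm]
    ring
  have hg2 : ‖g‖ ^ 2 ≤ G ^ 2 := pow_le_pow_left₀ (norm_nonneg g) hg 2
  nlinarith [mul_le_mul_of_nonneg_left hg2 (sq_nonneg η), mul_le_mul_of_nonneg_left hstrong hη]

end InnerProductSpace

theorem online_prox_one_round_strongly_convex_general {d J : ℕ}
    (Θ : Set (EuclideanSpace ℝ (Fin d))) (hΘconv : Convex ℝ Θ)
    (lam η G : ℝ) (hlam : 0 ≤ lam) (hη : 0 < η)
    (L : EuclideanSpace ℝ (Fin d) → ℝ)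
    (hLlip : ∀ θ₀ ∈ Θ, ∀ g : EuclideanSpace ℝ (Fin d), IsSubgradientAt L g θ₀ → ‖g‖ ≤ G)
    (R : Fin J → EuclideanSpace ℝ (Fin d) → EReal)
    (hRconv : ∀ j, ERealConvexOn (R j))
    (hRprop : ∀ j, ERealProper (R j))
    -- condition (ii): each prox operator does not increase the previous `R_{j'}`
    (hii : ∀ j j' : Fin J, j' < j → ∀ θ θ' : EuclideanSpace ℝ (Fin d),
      IsProxPtOf (η * lam) (R j) θ θ' → R j' θ' ≤ R j' θ)
    -- condition (iii): projecting onto `Θ` does not increase `R`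
    (hiii : ∀ θ θ' : EuclideanSpace ℝ (Fin d), IsProjPt Θ θ θ' →
      (∑ j, R j θ') ≤ ∑ j, R j θ)
    -- one round of the algorithm
    (θt : EuclideanSpace ℝ (Fin d)) (hθt : θt ∈ Θ)
    (g : EuclideanSpace ℝ (Fin d)) (hg : IsSubgradientAt L g θt)
    (θtil : Fin (J + 1) → EuclideanSpace ℝ (Fin d))
    (h0 : θtil 0 = θt - η • g)
    (hsteps : ∀ j : Fin J, IsProxPtOf (η * lam) (R j) (θtil j.castSucc) (θtil j.succ))
    (θnext : EuclideanSpace ℝ (Fin d)) (hproj : IsProjPt Θ (θtil (Fin.last J)) θnext)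
    (θbar : EuclideanSpace ℝ (Fin d)) (hθbar : θbar ∈ Θ)
    -- in addition, `L` is `σ`-strongly convex on `Θ`
    (σ : ℝ)
    (hstrong : ∀ θ₀ ∈ Θ, ∀ g' : EuclideanSpace ℝ (Fin d), IsSubgradientAt L g' θ₀ →
      ∀ θ : EuclideanSpace ℝ (Fin d),
        L θ₀ + (⟪g', θ - θ₀⟫ : ℝ) + σ / 2 * ‖θ - θ₀‖ ^ 2 ≤ L θ) :
    ((L θt : ℝ) : EReal) + (lam : EReal) * (∑ j, R j θnext)
      ≤ ((L θbar : ℝ) : EReal) + (lam : EReal) * (∑ j, R j θbar)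
        + ((η / 2 * G ^ 2 + (‖θbar - θt‖ ^ 2 - ‖θbar - θnext‖ ^ 2) / (2 * η)
            - σ / 2 * ‖θbar - θt‖ ^ 2 : ℝ) : EReal) := by
  have hηlam : 0 ≤ η * lam := by positivity
  have hrounds := Fin.add_sum_le_add_sum_of_succ_add_le
    (fun k => ((1 / 2 * ‖θbar - θtil k‖ ^ 2 : ℝ) : EReal))
    (fun j => ((η * lam : ℝ) : EReal) * R j (θtil j.succ))
    (fun j => ((η * lam : ℝ) : EReal) * R j θbar)
    fun j => IsProxPt.half_norm_sub_sq_add_le ((hRconv j).const_mul hηlam)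
      (fun x => EReal.coe_mul_ne_bot_of_nonneg hηlam ((hRprop j).2 x)) (hsteps j) θbar
  have hreg : ∑ j, R j θnext ≤ ∑ j, R j (θtil j.succ) :=
    (hiii _ _ hproj).trans <| Finset.sum_le_sum fun j _ =>
      Fin.apply_last_le_of_succ_le_castSucc (fun k => R j (θtil k)) j.succ fun k hk =>
        hii k j (Fin.succ_le_castSucc_iff.1 hk) _ _ (hsteps k)
  have hgrad := half_norm_sub_sub_smul_sq_le hη.le (hLlip θt hθt g hg) (hstrong θt hθt g hg θbar)
  simp only [← EReal.coe_mul_sum_of_nonneg _ _ hηlam, h0] at hrounds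
  have key : ((1 / 2 * ‖θbar - θnext‖ ^ 2 : ℝ) : EReal) + η * (lam * ∑ j, R j θnext)
      ≤ ((1 / 2 * ‖θbar - θt‖ ^ 2 - η * (L θt - L θbar) - η * σ / 2 * ‖θbar - θt‖ ^ 2
          + η ^ 2 / 2 * G ^ 2 : ℝ) : EReal) + η * (lam * ∑ j, R j θbar) := by
    rw [← mul_assoc, ← mul_assoc, ← EReal.coe_mul]
    calc _ ≤ ((1 / 2 * ‖θbar - θtil (Fin.last J)‖ ^ 2 : ℝ) : EReal)
          + ((η * lam : ℝ) : EReal) * ∑ j, R j (θtil j.succ) := by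
          gcongr
          exact hproj.norm_sub_le hΘconv hθbar
      _ ≤ _ := hrounds
      _ ≤ _ := add_le_add_left (EReal.coe_le_coe_iff.2 hgrad) _
  refine EReal.coe_add_le_coe_add_add_coe (EReal.coe_div_add_le_coe_div_add hη key) (le_of_eq ?_)
  field_simp
  ring

/-- one-round descent inequality, strongly convex case. -/
theorem online_prox_one_round_strongly_convex {d J : ℕ} (hJ : 0 < J)
    (Θ : Set (EuclideanSpace ℝ (Fin d))) (hΘc : IsClosed Θ) (hΘconv : Convex ℝ Θ)
    (lam η G : ℝ) (hlam : 0 ≤ lam) (hη : 0 < η) (hG : 0 ≤ G)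
    (L : EuclideanSpace ℝ (Fin d) → ℝ) (hLconv : ConvexOn ℝ Set.univ L)
    (hLlip : ∀ θ₀ ∈ Θ, ∀ g : EuclideanSpace ℝ (Fin d), IsSubgradientAt L g θ₀ → ‖g‖ ≤ G)
    (R : Fin J → EuclideanSpace ℝ (Fin d) → EReal)
    (hRconv : ∀ j, ERealConvexOn (R j)) (hRlsc : ∀ j, LowerSemicontinuous (R j))
    (hRprop : ∀ j, ERealProper (R j))
    -- condition (ii): each prox operator does not increase the previous `R_{j'}`
    (hii : ∀ j j' : Fin J, j' < j → ∀ θ θ' : EuclideanSpace ℝ (Fin d),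
      IsProxPtOf (η * lam) (R j) θ θ' → R j' θ' ≤ R j' θ)
    -- condition (iii): projecting onto `Θ` does not increase `R`
    (hiii : ∀ θ θ' : EuclideanSpace ℝ (Fin d), IsProjPt Θ θ θ' →
      (∑ j, R j θ') ≤ ∑ j, R j θ)
    -- one round of the algorithm
    (θt : EuclideanSpace ℝ (Fin d)) (hθt : θt ∈ Θ)
    (g : EuclideanSpace ℝ (Fin d)) (hg : IsSubgradientAt L g θt)
    (θtil : Fin (J + 1) → EuclideanSpace ℝ (Fin d))
    (h0 : θtil 0 = θt - η • g)
    (hsteps : ∀ j : Fin J, IsProxPtOf (η * lam) (R j) (θtil j.castSucc) (θtil j.succ))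
    (θnext : EuclideanSpace ℝ (Fin d)) (hproj : IsProjPt Θ (θtil (Fin.last J)) θnext)
    (θbar : EuclideanSpace ℝ (Fin d)) (hθbar : θbar ∈ Θ)
    -- in addition, `L` is `σ`-strongly convex on `Θ`
    (σ : ℝ)
    (hstrong : ∀ θ₀ ∈ Θ, ∀ g' : EuclideanSpace ℝ (Fin d), IsSubgradientAt L g' θ₀ →
      ∀ θ : EuclideanSpace ℝ (Fin d),
        L θ₀ + (⟪g', θ - θ₀⟫ : ℝ) + σ / 2 * ‖θ - θ₀‖ ^ 2 ≤ L θ) :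
    ((L θt : ℝ) : EReal) + (lam : EReal) * (∑ j, R j θnext)
      ≤ ((L θbar : ℝ) : EReal) + (lam : EReal) * (∑ j, R j θbar)
        + ((η / 2 * G ^ 2 + (‖θbar - θt‖ ^ 2 - ‖θbar - θnext‖ ^ 2) / (2 * η)
            - σ / 2 * ‖θbar - θt‖ ^ 2 : ℝ) : EReal) :=
  online_prox_one_round_strongly_convex_general Θ hΘconv lam η G hlam hη L hLlip R hRconv hRprop hii
    hiii θt hθt g hg θtil h0 hsteps θnext hproj θbar hθbar σ hstrong
end
end
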